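/- Let Φ ∈ ℝ^{N×P}, let D ∈ ℝ^{P×P} with Φ D Φᵀ invertible, and let D_t = c_t D with scalars c_t > 0 (as arises for AdaGrad when all gradients point in a common direction). Then A_t := D_{t−1}Φᵀ(Φ D_{t−1} Φᵀ)⁻¹ = D Φᵀ(Φ D Φᵀ)⁻¹ is the same matrix for every t, and consequently B_t = Σ_{v=2}^{t} (A_{v−1} − A_v)[⋯] = 0 for all t. Moreover, if the ordered products Π_{u=t−1}^{0} ( I − (η c_u/N) Φ D Φᵀ ) converge to 0 as t → ∞, then the adaptive gradient iterates θ_{t+1} = θ_t − (η/N) D_t Φᵀ(Φθ_t − Ŷ) converge to θ∞ = θ₀ + D Φᵀ(Φ D Φᵀ)⁻¹ (Ŷ − Φθ₀). -/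
import Mathlib

open Matrix Filter

/-- Ordered matrix product `ordProd M t = M (t−1) * M (t−2) * ⋯ * M 0` (and `1` for `t = 0`). -/
def ordProd {N : ℕ} (M : ℕ → Matrix (Fin N) (Fin N) ℝ) : ℕ → Matrix (Fin N) (Fin N) ℝ
  | 0 => 1
  | t + 1 => M t * ordProd M t

/-- `adaProd Φ D η t = Π_{u=t−1}^{0} (I − (η/N) Φ D_u Φᵀ)`. -/
noncomputable def adaProd {N P : ℕ} (Φ : Matrix (Fin N) (Fin P) ℝ)
    (D : ℕ → Matrix (Fin P) (Fin P) ℝ) (η : ℝ) : ℕ → Matrix (Fin N) (Fin N) ℝ :=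
  ordProd fun u => 1 - (η / N) • (Φ * D u * Φᵀ)

/-- `adaA Φ D t = A_t = D_{t−1} Φᵀ (Φ D_{t−1} Φᵀ)⁻¹`. -/
noncomputable def adaA {N P : ℕ} (Φ : Matrix (Fin N) (Fin P) ℝ)
    (D : ℕ → Matrix (Fin P) (Fin P) ℝ) (t : ℕ) : Matrix (Fin P) (Fin N) ℝ :=
  D (t - 1) * Φᵀ * (Φ * D (t - 1) * Φᵀ)⁻¹

/-- `adaB Φ D η r₀ t = B_t = Σ_{v=2}^{t} (A_{v−1} − A_v)[I − Π_{w=v−2}^{0}(I − (η/N) Φ D_w Φᵀ)] r₀`. -/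
noncomputable def adaB {N P : ℕ} (Φ : Matrix (Fin N) (Fin P) ℝ)
    (D : ℕ → Matrix (Fin P) (Fin P) ℝ) (η : ℝ) (r₀ : Fin N → ℝ) (t : ℕ) : Fin P → ℝ :=
  ∑ v ∈ Finset.Icc 2 t,
    ((adaA Φ D (v - 1) - adaA Φ D v) * (1 - adaProd Φ D η (v - 1))).mulVec r₀

/-- **AdaGrad with a fixed gradient direction (Example 1).** If `D_t = c_t D` with scalars
`c_t > 0` and `Φ D Φᵀ` invertible, then `A_t = D Φᵀ (Φ D Φᵀ)⁻¹` is constant, `B_t = 0` for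
all `t`, and (provided the ordered products `Π_{u=t−1}^{0}(I − (η c_u/N) Φ D Φᵀ)` tend to `0`)
the adaptive iterates converge to `θ∞ = θ₀ + D Φᵀ (Φ D Φᵀ)⁻¹ (Yhat − Φθ₀)`. -/
theorem adagrad_constant_direction {N P : ℕ} (Φ : Matrix (Fin N) (Fin P) ℝ)
    (D : Matrix (Fin P) (Fin P) ℝ) (hinv : IsUnit (Φ * D * Φᵀ).det)
    (c : ℕ → ℝ) (hc : ∀ t, 0 < c t) (η : ℝ) (hη : 0 < η)
    (Yhat : Fin N → ℝ) (θ₀ : Fin P → ℝ) :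
    (∀ t : ℕ, adaA Φ (fun u => c u • D) t = D * Φᵀ * (Φ * D * Φᵀ)⁻¹) ∧
    (∀ t : ℕ, adaB Φ (fun u => c u • D) η (Yhat - Φ.mulVec θ₀) t = 0) ∧
    (Tendsto (fun t => ordProd (fun u => 1 - (η * c u / N) • (Φ * D * Φᵀ)) t)
        atTop (nhds 0) →
      ∀ θ : ℕ → Fin P → ℝ, θ 0 = θ₀ →
        (∀ t, θ (t + 1) =
          θ t - (η / N) • ((c t • D) * Φᵀ).mulVec (Φ.mulVec (θ t) - Yhat)) →
        Tendsto θ atTop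
          (nhds (θ₀ + (D * Φᵀ * (Φ * D * Φᵀ)⁻¹).mulVec (Yhat - Φ.mulVec θ₀)))) := by
  set K : Matrix (Fin N) (Fin N) ℝ := Φ * D * Φᵀ with hK
  set A : Matrix (Fin P) (Fin N) ℝ := D * Φᵀ * K⁻¹ with hA
  have hAconst : ∀ t : ℕ, adaA Φ (fun u => c u • D) t = A := by
    intro t
    have hcne : c (t - 1) ≠ 0 := (hc _).ne'
    haveI : Invertible (c (t - 1)) := invertibleOfNonzero hcne
    have h1 : Φ * (c (t - 1) • D) * Φᵀ = c (t - 1) • K := by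
      rw [hK, Matrix.mul_smul, Matrix.smul_mul]
    rw [adaA, h1, Matrix.inv_smul (A := K) (c (t - 1)) hinv, invOf_eq_inv, Matrix.smul_mul, Matrix.smul_mul,
      Matrix.mul_smul, smul_smul, mul_inv_cancel₀ hcne, one_smul, hA]
  refine ⟨hAconst, ?_, ?_⟩
  · intro t
    unfold adaB
    refine Finset.sum_eq_zero fun v _ => ?_
    rw [hAconst, hAconst, sub_self, Matrix.zero_mul, Matrix.zero_mulVec]
  · intro hP θ hθ0 hθ
    set r₀ : Fin N → ℝ := Yhat - Φ.mulVec θ₀ with hr₀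
    set M : ℕ → Matrix (Fin N) (Fin N) ℝ :=
      fun u => 1 - (η * c u / N) • K with hM
    have hAK : A * K = D * Φᵀ := by
      rw [hA, Matrix.mul_assoc, Matrix.nonsing_inv_mul _ hinv, Matrix.mul_one]
    have hΦA : Φ * A = 1 := by
      rw [hA, ← Matrix.mul_assoc, ← Matrix.mul_assoc, ← hK, Matrix.mul_nonsing_inv _ hinv]
    have hclosed : ∀ t, θ t = θ₀ + A.mulVec r₀ - A.mulVec ((ordProd M t).mulVec r₀) := by
      intro t
      induction t with
      | zero => simp [ordProd, hθ0]
      | succ t ih =>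
        have hΦAv : ∀ x : Fin N → ℝ, Φ.mulVec (A.mulVec x) = x := fun x => by
          rw [Matrix.mulVec_mulVec, hΦA, Matrix.one_mulVec]
        have h2 : A * M t = A - (η * c t / N) • (D * Φᵀ) := by
          show A * (1 - (η * c t / N) • K) = _
          rw [Matrix.mul_sub, Matrix.mul_one, Matrix.mul_smul, hAK]
        have hres : Φ.mulVec (θ t) - Yhat = -((ordProd M t).mulVec r₀) := by
          rw [ih, Matrix.mulVec_sub, Matrix.mulVec_add, hΦAv, hΦAv, hr₀]
          abel
        have e3 : A.mulVec ((ordProd M (t + 1)).mulVec r₀)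
            = A.mulVec ((ordProd M t).mulVec r₀)
              - (η * c t / N) • ((D * Φᵀ).mulVec ((ordProd M t).mulVec r₀)) := by
          show A.mulVec ((M t * ordProd M t).mulVec r₀) = _
          rw [Matrix.mulVec_mulVec, ← Matrix.mul_assoc, h2, Matrix.sub_mul,
            Matrix.sub_mulVec, Matrix.smul_mul, Matrix.smul_mulVec]
          congr 1
          · exact (Matrix.mulVec_mulVec _ _ _).symm
          · congr 1
            exact (Matrix.mulVec_mulVec _ _ _).symm
        have e4 : (η / N) • ((c t • D) * Φᵀ).mulVec (-((ordProd M t).mulVec r₀))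
            = -((η * c t / N) • ((D * Φᵀ).mulVec ((ordProd M t).mulVec r₀))) := by
          rw [Matrix.smul_mul, Matrix.mulVec_neg, Matrix.smul_mulVec]
          module
        rw [hθ t, hres, ih, e4, e3]
        abel
    have hcont : Tendsto (fun t => A.mulVec ((ordProd M t).mulVec r₀)) atTop (nhds 0) := by
      have h0 : A.mulVec (((0 : Matrix (Fin N) (Fin N) ℝ)).mulVec r₀) = 0 := by
        rw [Matrix.zero_mulVec, Matrix.mulVec_zero]
      have hc2 : Continuous fun Q : Matrix (Fin N) (Fin N) ℝ => A.mulVec (Q.mulVec r₀) :=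
        continuous_const.matrix_mulVec (continuous_id.matrix_mulVec continuous_const)
      have := (hc2.tendsto 0).comp hP
      rwa [h0] at this
    have hlim : Tendsto (fun t => θ₀ + A.mulVec r₀ - A.mulVec ((ordProd M t).mulVec r₀))
        atTop (nhds (θ₀ + A.mulVec r₀ - 0)) := tendsto_const_nhds.sub hcont
    rw [sub_zero] at hlim
    exact (hlim.congr fun t => (hclosed t).symm)
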